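/- Let u, v : ℝ → ℝ be continuous, let 𝓛_θ : (ℝ²)^N → ℝ and 𝓛_x, 𝓛_i : (ℝ²)^N → ℝ² (1 ≤ i ≤ N) be continuous gain functions, and let J = R_{π/2} denote the rotation by π/2 (i.e. the planar action of e₃ ∧ ·). Suppose x, p_i, x̂, p̂_i : ℝ → ℝ² and θ, θ̂ : ℝ → ℝ are differentiable, the state satisfies ẋ = u R_θ e₁, θ̇ = u v, ṗ_i = 0 with outputs z_i = R_{−θ}(p_i − x), and the observer satisfies θ̂' = u v + 𝓛_θ(E), x̂' = u R_{θ̂} e₁ + 𝓛_θ(E) J x̂ + 𝓛_x(E), p̂_i' = 𝓛_θ(E) J p̂_i + 𝓛_i(E), where E = (R_{θ̂}(ẑ_i − z_i))_{1≤i≤N} and ẑ_i = R_{−θ̂}(p̂_i − x̂). Then the invariant state error η = (θ̃, x̃, p̃₁, …, p̃_N), with θ̃ = θ̂ − θ, x̃ = x̂ − R_{θ̃} x, p̃_i = p̂_i − R_{θ̃} p_i, satisfies the autonomous differential equation θ̃' = 𝓛_θ(E), x̃' = 𝓛_θ(E) J x̃ + 𝓛_x(E), p̃_i' = 𝓛_θ(E)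 J p̃_i + 𝓛_i(E), where E_i = p̃_i − x̃; in particular η' depends only on η and is completely independent of the trajectory and of the inputs u(t), v(t). -/

import Mathlib

open Real Matrix

/-- The planar rotation matrix `R_θ`. -/
noncomputable def Rot (θ : ℝ) : Matrix (Fin 2) (Fin 2) ℝ :=
  !![Real.cos θ, -Real.sin θ; Real.sin θ, Real.cos θ]

/-- The first basis vector `e₁ = (1,0)ᵀ` of `ℝ²`. -/
def e₁ : Fin 2 → ℝ := ![1, 0]

/-- `J = R_{π/2} = ((0,−1),(1,0))`, the planar action of `e₃ ∧ ·`. -/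
def Jmat : Matrix (Fin 2) (Fin 2) ℝ := !![0, -1; 1, 0]

/-! The invariant error is built so that the inputs cancel. The heading error
`θ̃ = θ̂ - θ` loses the common term `u v`. Differentiating `R_{θ̃} y` gives
`θ̃' J R_{θ̃} y + R_{θ̃} y'`, and `R_{θ̃}` turns the vehicle velocity `u R_θ e₁` into the
observer's `u R_{θ̂} e₁`, which therefore drops out of `x̃'`; the landmarks are fixed. Finally
`R_{θ̂} R_{-θ̂} = 1` and `R_{θ̂} R_{-θ} = R_{θ̃}` turn the output error `E` into `p̃ᵢ - x̃`. -/

theorem HasDerivAt.const_mulVec {𝕜 n m : Type*} [NontriviallyNormedField 𝕜] [CompleteSpace 𝕜]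
    [Fintype m] [Fintype n] (A : Matrix n m 𝕜) {g : 𝕜 → m → 𝕜} {g' : m → 𝕜} {t : 𝕜}
    (hg : HasDerivAt g g' t) : HasDerivAt (fun s => A *ᵥ g s) (A *ᵥ g') t :=
  (Matrix.mulVecLin A).toContinuousLinearMap.hasFDerivAt.comp_hasDerivAt t hg

theorem rot_add (a b : ℝ) : Rot (a + b) = Rot a * Rot b := by
  ext i j
  fin_cases i <;> fin_cases j <;>
    simp [Rot, Matrix.mul_apply, Real.cos_add, Real.sin_add] <;> ring

theorem rot_zero : Rot 0 = 1 := by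
  simp [Rot, Matrix.one_fin_two]

theorem rot_mulVec_rot_mulVec (a b : ℝ) (w : Fin 2 → ℝ) :
    Rot a *ᵥ (Rot b *ᵥ w) = Rot (a + b) *ᵥ w := by
  rw [mulVec_mulVec, rot_add]

theorem rot_mulVec (θ : ℝ) (w : Fin 2 → ℝ) :
    Rot θ *ᵥ w = Real.cos θ • w + Real.sin θ • Jmat *ᵥ w := by
  ext i
  fin_cases i <;> simp [Rot, Jmat, mulVec, dotProduct, add_comm]

theorem jmat_mulVec_jmat_mulVec (w : Fin 2 → ℝ) : Jmat *ᵥ (Jmat *ᵥ w) = -w := by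
  ext i
  fin_cases i <;> simp [Jmat, mulVec, dotProduct]

theorem HasDerivAt.rot_mulVec {φ : ℝ → ℝ} {g : ℝ → Fin 2 → ℝ} {φ' : ℝ} {g' : Fin 2 → ℝ} {t : ℝ}
    (hφ : HasDerivAt φ φ' t) (hg : HasDerivAt g g' t) :
    HasDerivAt (fun s => Rot (φ s) *ᵥ g s)
      (φ' • Jmat *ᵥ (Rot (φ t) *ᵥ g t) + Rot (φ t) *ᵥ g') t := by
  have hcos := ((Real.hasDerivAt_cos (φ t)).comp t hφ).smul hg
  have hsin := ((Real.hasDerivAt_sin (φ t)).comp t hφ).smul (hg.const_mulVec Jmat)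
  simp only [_root_.rot_mulVec]
  refine (hcos.add hsin).congr_deriv ?_
  rw [mulVec_add, mulVec_smul, mulVec_smul, jmat_mulVec_jmat_mulVec, Function.comp_apply,
    Function.comp_apply]
  module

theorem HasDerivAt.sub_rot_mulVec {φ : ℝ → ℝ} {y yhat : ℝ → Fin 2 → ℝ} {ℓ : ℝ}
    {w c : Fin 2 → ℝ} {t : ℝ} (hφ : HasDerivAt φ ℓ t) (hy : HasDerivAt y w t)
    (hyhat : HasDerivAt yhat (Rot (φ t) *ᵥ w + ℓ • Jmat *ᵥ yhat t + c) t) :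
    HasDerivAt (fun s => yhat s - Rot (φ s) *ᵥ y s)
      (ℓ • Jmat *ᵥ (yhat t - Rot (φ t) *ᵥ y t) + c) t := by
  refine (hyhat.sub (hφ.rot_mulVec hy)).congr_deriv ?_
  rw [mulVec_sub, smul_sub]
  abel

theorem rot_mulVec_rot_neg_mulVec_sub_rot_neg_mulVec (θhat θ : ℝ) (a b : Fin 2 → ℝ) :
    Rot θhat *ᵥ (Rot (-θhat) *ᵥ a - Rot (-θ) *ᵥ b) = a - Rot (θhat - θ) *ᵥ b := by
  rw [mulVec_sub, rot_mulVec_rot_mulVec, rot_mulVec_rot_mulVec, add_neg_cancel, rot_zero,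
    one_mulVec, ← sub_eq_add_neg]

theorem invariant_ekf_slam_error_autonomous_general
    {N : ℕ} (u v : ℝ → ℝ)
    (Lθ : (Fin N → Fin 2 → ℝ) → ℝ)
    (Lx : (Fin N → Fin 2 → ℝ) → Fin 2 → ℝ)
    (Li : Fin N → (Fin N → Fin 2 → ℝ) → Fin 2 → ℝ)
    (x xhat : ℝ → Fin 2 → ℝ) (θ θhat : ℝ → ℝ)
    (p phat : Fin N → ℝ → Fin 2 → ℝ)
    (z zhat : Fin N → ℝ → Fin 2 → ℝ)
    (hz : ∀ i t, z i t = (Rot (-(θ t))).mulVec (p i t - x t))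
    (hzhat : ∀ i t, zhat i t = (Rot (-(θhat t))).mulVec (phat i t - xhat t))
    (E : ℝ → Fin N → Fin 2 → ℝ)
    (hE : ∀ t i, E t i = (Rot (θhat t)).mulVec (zhat i t - z i t))
    -- system dynamics
    (hx : ∀ t, HasDerivAt x (u t • (Rot (θ t)).mulVec e₁) t)
    (hθ : ∀ t, HasDerivAt θ (u t * v t) t)
    (hp : ∀ i t, HasDerivAt (p i) 0 t)
    -- observer dynamics
    (hθhat : ∀ t, HasDerivAt θhat (u t * v t + Lθ (E t)) t)
    (hxhat : ∀ t, HasDerivAt xhat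
      (u t • (Rot (θhat t)).mulVec e₁ + Lθ (E t) • Jmat.mulVec (xhat t) + Lx (E t)) t)
    (hphat : ∀ i t, HasDerivAt (phat i)
      (Lθ (E t) • Jmat.mulVec (phat i t) + Li i (E t)) t)
    -- invariant state error
    (θtil : ℝ → ℝ) (hθtil : ∀ t, θtil t = θhat t - θ t)
    (xtil : ℝ → Fin 2 → ℝ) (hxtil : ∀ t, xtil t = xhat t - (Rot (θtil t)).mulVec (x t))
    (ptil : Fin N → ℝ → Fin 2 → ℝ)
    (hptil : ∀ i t, ptil i t = phat i t - (Rot (θtil t)).mulVec (p i t))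
    (Etil : ℝ → Fin N → Fin 2 → ℝ) (hEtil : ∀ t i, Etil t i = ptil i t - xtil t) :
    ∀ t, HasDerivAt θtil (Lθ (Etil t)) t ∧
      HasDerivAt xtil (Lθ (Etil t) • Jmat.mulVec (xtil t) + Lx (Etil t)) t ∧
      ∀ i, HasDerivAt (ptil i)
        (Lθ (Etil t) • Jmat.mulVec (ptil i t) + Li i (Etil t)) t := by
  obtain rfl : θtil = θhat - θ := funext hθtil
  obtain rfl : xtil = fun s => xhat s - Rot ((θhat - θ) s) *ᵥ x s := funext hxtil
  obtain rfl : ptil = fun i s => phat i s - Rot ((θhat - θ) s) *ᵥ p i s :=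
    funext fun i => funext (hptil i)
  intro t
  have hE_eq : E t = Etil t := by
    ext1 i
    rw [hE, hzhat, hz, hEtil, rot_mulVec_rot_neg_mulVec_sub_rot_neg_mulVec, mulVec_sub]
    simp only [Pi.sub_apply]
    abel
  rw [← hE_eq]
  have hθtil' : HasDerivAt (θhat - θ) (Lθ (E t)) t := by
    simpa using (hθhat t).sub (hθ t)
  refine ⟨hθtil', hθtil'.sub_rot_mulVec (hx t) ?_, fun i => hθtil'.sub_rot_mulVec (hp i t) ?_⟩
  · rw [mulVec_smul, rot_mulVec_rot_mulVec, Pi.sub_apply, sub_add_cancel]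
    exact hxhat t
  · rw [mulVec_zero, zero_add]
    exact hphat i t

/-- **Autonomy of the invariant error equation for the general invariant SLAM observer.**
For the SLAM system `ẋ = u R_θ e₁`, `θ̇ = u v`, `ṗᵢ = 0` with outputs `zᵢ = R_{−θ}(pᵢ − x)`
and the invariant observer `θ̂' = u v + 𝓛_θ(E)`, `x̂' = u R_{θ̂} e₁ + 𝓛_θ(E) J x̂ + 𝓛_x(E)`,
`p̂ᵢ' = 𝓛_θ(E) J p̂ᵢ + 𝓛ᵢ(E)` with `E = (R_{θ̂}(ẑᵢ − zᵢ))ᵢ`, the invariant state error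
`η = (θ̃, x̃, p̃₁, …, p̃_N)`, `θ̃ = θ̂ − θ`, `x̃ = x̂ − R_{θ̃} x`, `p̃ᵢ = p̂ᵢ − R_{θ̃} pᵢ`, satisfies
the autonomous equation `θ̃' = 𝓛_θ(E)`, `x̃' = 𝓛_θ(E) J x̃ + 𝓛_x(E)`,
`p̃ᵢ' = 𝓛_θ(E) J p̃ᵢ + 𝓛ᵢ(E)` with `Eᵢ = p̃ᵢ − x̃`: it depends only on `η`, independently of
the trajectory and of the inputs `u`, `v`. -/
theorem invariant_ekf_slam_error_autonomous
    {N : ℕ} (u v : ℝ → ℝ) (hu : Continuous u) (hv : Continuous v)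
    (Lθ : (Fin N → Fin 2 → ℝ) → ℝ)
    (Lx : (Fin N → Fin 2 → ℝ) → Fin 2 → ℝ)
    (Li : Fin N → (Fin N → Fin 2 → ℝ) → Fin 2 → ℝ)
    (hLθ : Continuous Lθ) (hLx : Continuous Lx) (hLi : ∀ i, Continuous (Li i))
    (x xhat : ℝ → Fin 2 → ℝ) (θ θhat : ℝ → ℝ)
    (p phat : Fin N → ℝ → Fin 2 → ℝ)
    (z zhat : Fin N → ℝ → Fin 2 → ℝ)
    (hz : ∀ i t, z i t = (Rot (-(θ t))).mulVec (p i t - x t))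
    (hzhat : ∀ i t, zhat i t = (Rot (-(θhat t))).mulVec (phat i t - xhat t))
    (E : ℝ → Fin N → Fin 2 → ℝ)
    (hE : ∀ t i, E t i = (Rot (θhat t)).mulVec (zhat i t - z i t))
    -- system dynamics
    (hx : ∀ t, HasDerivAt x (u t • (Rot (θ t)).mulVec e₁) t)
    (hθ : ∀ t, HasDerivAt θ (u t * v t) t)
    (hp : ∀ i t, HasDerivAt (p i) 0 t)
    -- observer dynamics
    (hθhat : ∀ t, HasDerivAt θhat (u t * v t + Lθ (E t)) t)
    (hxhat : ∀ t, HasDerivAt xhat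
      (u t • (Rot (θhat t)).mulVec e₁ + Lθ (E t) • Jmat.mulVec (xhat t) + Lx (E t)) t)
    (hphat : ∀ i t, HasDerivAt (phat i)
      (Lθ (E t) • Jmat.mulVec (phat i t) + Li i (E t)) t)
    -- invariant state error
    (θtil : ℝ → ℝ) (hθtil : ∀ t, θtil t = θhat t - θ t)
    (xtil : ℝ → Fin 2 → ℝ) (hxtil : ∀ t, xtil t = xhat t - (Rot (θtil t)).mulVec (x t))
    (ptil : Fin N → ℝ → Fin 2 → ℝ)
    (hptil : ∀ i t, ptil i t = phat i t - (Rot (θtil t)).mulVec (p i t))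
    (Etil : ℝ → Fin N → Fin 2 → ℝ) (hEtil : ∀ t i, Etil t i = ptil i t - xtil t) :
    ∀ t, HasDerivAt θtil (Lθ (Etil t)) t ∧
      HasDerivAt xtil (Lθ (Etil t) • Jmat.mulVec (xtil t) + Lx (Etil t)) t ∧
      ∀ i, HasDerivAt (ptil i)
        (Lθ (Etil t) • Jmat.mulVec (ptil i t) + Li i (Etil t)) t :=
  invariant_ekf_slam_error_autonomous_general u v Lθ Lx Li x xhat θ θhat p phat z zhat hz hzhat E hE
    hx hθ hp hθhat hxhat hphat θtil hθtil xtil hxtil ptil hptil Etil hEtil
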